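/- arXiv:1505.05434 — 2 statements merged into one kernel-verified Lean document; each statement's English description precedes it below -/
import Mathlib

section
/- For measurable functions x, y on [0,∞) vanishing at infinity in measure, the decreasing rearrangement of the pointwise product satisfies (xy)*(t) ≤ x*(t/2) · y*(t/2) for all t > 0. -/
open MeasureTheory

/-- The decreasing rearrangement of `|f|` with respect to the measure `μ`. -/
noncomputable def rearr {α : Type*} [MeasurableSpace α] (μ : Measure α)
    (f : α → ℝ) (t : ℝ) : ℝ :=
  sInf {s : ℝ | 0 ≤ s ∧ μ {u | s < |f u|} ≤ ENNReal.ofReal t}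

/-- `f` vanishes at infinity in measure: every level set `{|f| > ε}` with `ε > 0`
has finite measure. -/
def VanishesInMeasure {α : Type*} [MeasurableSpace α] (μ : Measure α) (f : α → ℝ) : Prop :=
  ∀ ε : ℝ, 0 < ε → μ {u | ε < |f u|} < ⊤

/-- A symmetric function space on a measure space: a linear subspace of the measurable
functions vanishing at infinity in measure, with a complete norm that is monotone with
respect to comparison of decreasing rearrangements. -/
structure SymmFnSpace (α : Type*) [MeasurableSpace α] (μ : Measure α) where
  carrier : Set (α → ℝ)
  N : (α → ℝ) → ℝ
  zero_mem : (0 : α → ℝ) ∈ carrier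
  add_mem : ∀ {x y : α → ℝ}, x ∈ carrier → y ∈ carrier → x + y ∈ carrier
  smul_mem : ∀ (c : ℝ) {x : α → ℝ}, x ∈ carrier → c • x ∈ carrier
  measurable_mem : ∀ {x : α → ℝ}, x ∈ carrier → Measurable x
  vanish_mem : ∀ {x : α → ℝ}, x ∈ carrier → VanishesInMeasure μ x
  norm_nonneg : ∀ x : α → ℝ, 0 ≤ N x
  norm_eq_zero : ∀ {x : α → ℝ}, x ∈ carrier → N x = 0 → x =ᵐ[μ] 0
  norm_add_le : ∀ {x y : α → ℝ}, x ∈ carrier → y ∈ carrier → N (x + y) ≤ N x + N y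
  norm_smul : ∀ (c : ℝ) (x : α → ℝ), N (c • x) = |c| * N x
  symm : ∀ {x y : α → ℝ}, Measurable x → VanishesInMeasure μ x → y ∈ carrier →
    (∀ t : ℝ, 0 < t → rearr μ x t ≤ rearr μ y t) → x ∈ carrier ∧ N x ≤ N y
  complete : ∀ f : ℕ → (α → ℝ), (∀ n, f n ∈ carrier) →
    (∀ ε : ℝ, 0 < ε → ∃ n₀, ∀ m ≥ n₀, ∀ n ≥ n₀, N (f m - f n) < ε) →
    ∃ g ∈ carrier, ∀ ε : ℝ, 0 < ε → ∃ n₀, ∀ n ≥ n₀, N (f n - g) < ε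

open scoped ENNReal

/-- Lebesgue measure on the half-line `[0, ∞)`. -/
noncomputable def mu0 : MeasureTheory.Measure ℝ := MeasureTheory.volume.restrict (Set.Ici 0)

/-!
If `|x u| ≤ a` and `|y u| ≤ b` then `|x u * y u| ≤ a * b`, so the level set `{|xy| > ab}` lies in
`{|x| > a} ∪ {|y| > b}`. For `a = x*(t/2)` and `b = y*(t/2)` both of these sets have measure at
most `t/2`, because the distribution function `s ↦ μ {|x| > s}` is right-continuous; hence `ab`
is admissible in the infimum defining `(xy)*(t)`.
-/

open MeasureTheory Filter Topology Set

theorem setOf_mul_lt_abs_mul_subset {α : Type*} {f g : α → ℝ} {a b : ℝ} (ha : 0 ≤ a) :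
    {u | a * b < |(f * g) u|} ⊆ {u | a < |f u|} ∪ {u | b < |g u|} := by
  intro u (hu : a * b < |f u * g u|)
  by_contra h
  simp only [mem_union, mem_ofPred_eq, not_or, not_lt] at h
  exact hu.not_ge (abs_mul (f u) (g u) ▸ mul_le_mul h.1 h.2 (abs_nonneg _) ha)

variable {α : Type*} [MeasurableSpace α] {μ : Measure α}

theorem measure_lt_le_of_forall_lt {g : α → ℝ} {a : ℝ} {c : ℝ≥0∞}
    (h : ∀ r, a < r → μ {u | r < g u} ≤ c) : μ {u | a < g u} ≤ c := by
  obtain ⟨r, hr_anti, hr_gt, hr_lim⟩ := exists_seq_strictAnti_tendsto a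
  have hunion : {u | a < g u} = ⋃ n, {u | r n < g u} := by
    ext u
    simp only [mem_ofPred_eq, mem_iUnion]
    exact ⟨fun hu ↦ (hr_lim.eventually (gt_mem_nhds hu)).exists,
      fun ⟨n, hn⟩ ↦ (hr_gt n).trans hn⟩
  have hmono : Monotone fun n ↦ {u | r n < g u} :=
    fun m n hmn u hu ↦ (hr_anti.antitone hmn).trans_lt hu
  rw [hunion, hmono.measure_iUnion]
  exact iSup_le fun n ↦ h _ (hr_gt n)

theorem VanishesInMeasure.tendsto_measure_lt_abs {f : α → ℝ} (hm : Measurable f)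
    (hv : VanishesInMeasure μ f) : Tendsto (fun r : ℝ ↦ μ {u | r < |f u|}) atTop (𝓝 0) := by
  have hanti : Antitone fun r : ℝ ↦ {u | r < |f u|} :=
    fun r s hrs u hu ↦ hrs.trans_lt hu
  have hempty : (⋂ r : ℝ, {u | r < |f u|}) = ∅ :=
    eq_empty_of_forall_notMem fun u hu ↦ lt_irrefl |f u| (mem_iInter.1 hu |f u|)
  simpa [Function.comp_def, hempty] using
    tendsto_measure_iInter_atTop
      (fun _ ↦ (measurableSet_lt measurable_const hm.abs).nullMeasurableSet) hanti
      ⟨1, (hv 1 one_pos).ne⟩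

theorem rearr_nonneg (f : α → ℝ) (t : ℝ) : 0 ≤ rearr μ f t :=
  Real.sInf_nonneg fun _ hs ↦ hs.1

theorem rearr_le_of_measure_le {f : α → ℝ} {s t : ℝ} (hs : 0 ≤ s)
    (h : μ {u | s < |f u|} ≤ ENNReal.ofReal t) : rearr μ f t ≤ s :=
  csInf_le ⟨0, fun _ hr ↦ hr.1⟩ ⟨hs, h⟩

theorem measure_rearr_lt_abs_le {f : α → ℝ} (hm : Measurable f) (hv : VanishesInMeasure μ f)
    {t : ℝ} (ht : 0 < t) : μ {u | rearr μ f t < |f u|} ≤ ENNReal.ofReal t := by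
  have hne : {s : ℝ | 0 ≤ s ∧ μ {u | s < |f u|} ≤ ENNReal.ofReal t}.Nonempty :=
    (((hv.tendsto_measure_lt_abs hm).eventually (gt_mem_nhds (ENNReal.ofReal_pos.2 ht))).and
      (eventually_ge_atTop 0)).exists.imp fun _ hs ↦ ⟨hs.2, hs.1.le⟩
  refine measure_lt_le_of_forall_lt fun r hr ↦ ?_
  obtain ⟨s, ⟨-, hs⟩, hsr⟩ := exists_lt_of_csInf_lt hne hr
  exact (measure_mono fun u hu ↦ hsr.trans hu).trans hs

theorem rearr_mul_le_mul_rearr {f g : α → ℝ} (hfm : Measurable f) (hgm : Measurable g)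
    (hfv : VanishesInMeasure μ f) (hgv : VanishesInMeasure μ g) {s t : ℝ} (hs : 0 < s)
    (ht : 0 < t) : rearr μ (f * g) (s + t) ≤ rearr μ f s * rearr μ g t := by
  refine rearr_le_of_measure_le (mul_nonneg (rearr_nonneg f s) (rearr_nonneg g t)) ?_
  calc μ {u | rearr μ f s * rearr μ g t < |(f * g) u|}
      ≤ μ ({u | rearr μ f s < |f u|} ∪ {u | rearr μ g t < |g u|}) :=
        measure_mono (setOf_mul_lt_abs_mul_subset (rearr_nonneg f s))
    _ ≤ μ {u | rearr μ f s < |f u|} + μ {u | rearr μ g t < |g u|} := measure_union_le _ _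
    _ ≤ ENNReal.ofReal s + ENNReal.ofReal t :=
        add_le_add (measure_rearr_lt_abs_le hfm hfv hs) (measure_rearr_lt_abs_le hgm hgv ht)
    _ = ENNReal.ofReal (s + t) := (ENNReal.ofReal_add hs.le ht.le).symm

/-- For measurable functions on `[0, ∞)` vanishing at infinity in measure, the decreasing
rearrangement of a pointwise product satisfies `(xy)^*(t) ≤ x^*(t/2) y^*(t/2)`. -/
theorem rearr_mul_le {x y : ℝ → ℝ} (hxm : Measurable x) (hym : Measurable y)
    (hxv : VanishesInMeasure mu0 x) (hyv : VanishesInMeasure mu0 y) :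
    ∀ t : ℝ, 0 < t → rearr mu0 (x * y) t ≤ rearr mu0 x (t / 2) * rearr mu0 y (t / 2) := by
  intro t ht
  simpa only [add_halves] using rearr_mul_le_mul_rearr hxm hym hxv hyv (half_pos ht) (half_pos ht)
end

section
/- Let E be a symmetric function space on [0,∞) and 1 < p, q < ∞ with 1/p + 1/q = 1. For measurable functions x, y vanishing at infinity in measure with x ∈ E^{1/p} and y ∈ E^{1/q}, the product xy belongs to E and ‖xy‖_E ≤ 4 ‖x‖_{E^{1/p}} ‖y‖_{E^{1/q}}, where ‖x‖_{E^{1/p}} = ‖|x|^p‖_E^{1/p}. -/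
open MeasureTheory

open scoped ENNReal

/-!
Young's inequality `|s t| ≤ a b (|s|^p / (p a^p) + |t|^q / (q b^q))` dominates `|x y|` pointwise
by a positive combination of `|x|^p` and `|y|^q`, which lies in `E`. Pointwise domination implies
domination of decreasing rearrangements, so by symmetry of `E` the product `x y` lies in `E`, with
norm at most that of the combination. Choosing `a^p = ‖|x|^p‖ + ε`, `b^q = ‖|y|^q‖ + ε` and
letting `ε → 0` gives the inequality even with constant `1`.
-/

open Filter Topology

section Rearrangement

variable {α : Type*} [MeasurableSpace α] {μ : Measure α} {f g : α → ℝ}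

lemma VanishesInMeasure.mono (hg : VanishesInMeasure μ g) (hfg : ∀ u, |f u| ≤ |g u|) :
    VanishesInMeasure μ f :=
  fun ε hε => (measure_mono fun _ hu => lt_of_lt_of_le hu (hfg _)).trans_lt (hg ε hε)

lemma VanishesInMeasure.exists_measure_le (hg : VanishesInMeasure μ g) (hgm : Measurable g)
    {t : ℝ} (ht : 0 < t) : ∃ s : ℝ, 0 ≤ s ∧ μ {u | s < |g u|} ≤ ENNReal.ofReal t := by
  have hlim : Tendsto (fun s : ℝ => μ {u | s < |g u|}) atTop (𝓝 0) := by
    have hempty : ⋂ s : ℝ, {u | s < |g u|} = ∅ :=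
      Set.iInter_eq_empty_iff.2 fun u => ⟨|g u|, (lt_irrefl |g u| ·)⟩
    simpa [Function.comp_def, hempty] using
      tendsto_measure_iInter_atTop (μ := μ) (s := fun s : ℝ => {u | s < |g u|})
        (fun _ => (measurableSet_lt measurable_const hgm.abs).nullMeasurableSet)
        (fun _ _ hss' _ hu => lt_of_le_of_lt hss' hu) ⟨1, (hg 1 one_pos).ne⟩
  obtain ⟨s, hs⟩ := ((hlim.eventually_le_const (ENNReal.ofReal_pos.2 ht)).and
    (eventually_ge_atTop 0)).exists
  exact ⟨s, hs.2, hs.1⟩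

lemma rearr_le_rearr_of_abs_le (hfg : ∀ u, |f u| ≤ |g u|) (hgm : Measurable g)
    (hg : VanishesInMeasure μ g) {t : ℝ} (ht : 0 < t) : rearr μ f t ≤ rearr μ g t :=
  csInf_le_csInf ⟨0, fun _ hs => hs.1⟩ (hg.exists_measure_le hgm ht)
    fun _ ⟨hs0, hs⟩ => ⟨hs0, (measure_mono fun _ hu => lt_of_lt_of_le hu (hfg _)).trans hs⟩

end Rearrangement

lemma abs_mul_le_young {p q : ℝ} (hpq : p.HolderConjugate q) {a b : ℝ} (ha : 0 < a)
    (hb : 0 < b) (s t : ℝ) :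
    |s * t| ≤ a * b * (|s| ^ p / (p * a ^ p) + |t| ^ q / (q * b ^ q)) := by
  have h := Real.young_inequality_of_nonneg (div_nonneg (abs_nonneg s) ha.le)
    (div_nonneg (abs_nonneg t) hb.le) hpq
  rw [Real.div_rpow (abs_nonneg s) ha.le, Real.div_rpow (abs_nonneg t) hb.le] at h
  calc |s * t| = a * b * (|s| / a * (|t| / b)) := by rw [abs_mul]; field_simp
    _ ≤ a * b * (|s| ^ p / a ^ p / p + |t| ^ q / b ^ q / q) := by gcongr
    _ = a * b * (|s| ^ p / (p * a ^ p) + |t| ^ q / (q * b ^ q)) := by ring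

lemma le_rpow_mul_rpow_of_forall_pos {c A B r s : ℝ} (hr : 0 ≤ r) (hs : 0 ≤ s)
    (h : ∀ ε > 0, c ≤ (A + ε) ^ r * (B + ε) ^ s) : c ≤ A ^ r * B ^ s := by
  have hcont : ContinuousAt (fun ε : ℝ => (A + ε) ^ r * (B + ε) ^ s) 0 := by
    refine ((Real.continuousAt_rpow_const _ _ (Or.inr hr)).comp ?_).mul
      ((Real.continuousAt_rpow_const _ _ (Or.inr hs)).comp ?_) <;> fun_prop
  refine ge_of_tendsto (x := 𝓝[>] (0 : ℝ))
    (by simpa using hcont.tendsto.mono_left nhdsWithin_le_nhds) ?_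
  filter_upwards [self_mem_nhdsWithin] with ε hε using h ε hε

namespace SymmFnSpace

variable {α : Type*} [MeasurableSpace α] {μ : Measure α} (E : SymmFnSpace α μ)

lemma mem_and_norm_le_of_abs_le {f g : α → ℝ} (hfm : Measurable f) (hg : g ∈ E.carrier)
    (hfg : ∀ u, |f u| ≤ |g u|) : f ∈ E.carrier ∧ E.N f ≤ E.N g :=
  E.symm hfm ((E.vanish_mem hg).mono hfg) hg
    fun _ ht => rearr_le_rearr_of_abs_le hfg (E.measurable_mem hg) (E.vanish_mem hg) ht

lemma mul_mem_and_norm_le_young {p q : ℝ} (hpq : p.HolderConjugate q) {x y : α → ℝ}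
    (hxy : Measurable (x * y)) (hx : (fun u => |x u| ^ p) ∈ E.carrier)
    (hy : (fun u => |y u| ^ q) ∈ E.carrier) {a b : ℝ} (ha : 0 < a) (hb : 0 < b) :
    x * y ∈ E.carrier ∧ E.N (x * y) ≤
      a * b * ((E.N fun u => |x u| ^ p) / (p * a ^ p) +
        (E.N fun u => |y u| ^ q) / (q * b ^ q)) := by
  have hcx : 0 < a * b / (p * a ^ p) := by have := hpq.pos; positivity
  have hcy : 0 < a * b / (q * b ^ q) := by have := hpq.symm.pos; positivity
  set z := (a * b / (p * a ^ p)) • (fun u => |x u| ^ p) +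
    (a * b / (q * b ^ q)) • fun u => |y u| ^ q
  have hxz : (a * b / (p * a ^ p)) • (fun u => |x u| ^ p) ∈ E.carrier := E.smul_mem _ hx
  have hyz : (a * b / (q * b ^ q)) • (fun u => |y u| ^ q) ∈ E.carrier := E.smul_mem _ hy
  have hdom : ∀ u, |(x * y) u| ≤ |z u| := fun u =>
    (abs_mul_le_young hpq ha hb (x u) (y u)).trans
      (le_of_eq_of_le (by simp only [z, Pi.add_apply, Pi.smul_apply, smul_eq_mul]; ring)
        (le_abs_self _))
  obtain ⟨hmem, hle⟩ := E.mem_and_norm_le_of_abs_le hxy (E.add_mem hxz hyz) hdom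
  refine ⟨hmem, hle.trans ((E.norm_add_le hxz hyz).trans (le_of_eq ?_))⟩
  rw [E.norm_smul, E.norm_smul, abs_of_pos hcx, abs_of_pos hcy]
  ring

theorem mul_mem_and_norm_le_holder {p q : ℝ} (hpq : p.HolderConjugate q) {x y : α → ℝ}
    (hxy : Measurable (x * y)) (hx : (fun u => |x u| ^ p) ∈ E.carrier)
    (hy : (fun u => |y u| ^ q) ∈ E.carrier) :
    x * y ∈ E.carrier ∧
      E.N (x * y) ≤ (E.N fun u => |x u| ^ p) ^ (1 / p) * (E.N fun u => |y u| ^ q) ^ (1 / q) := by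
  set A := E.N fun u => |x u| ^ p
  set B := E.N fun u => |y u| ^ q
  have hp := hpq.pos
  have hq := hpq.symm.pos
  refine ⟨(E.mul_mem_and_norm_le_young hpq hxy hx hy one_pos one_pos).1,
    le_rpow_mul_rpow_of_forall_pos (by positivity) (by positivity) fun ε hε => ?_⟩
  have hA : 0 < A + ε := by have := E.norm_nonneg fun u => |x u| ^ p; linarith
  have hB : 0 < B + ε := by have := E.norm_nonneg fun u => |y u| ^ q; linarith
  have hap : ((A + ε) ^ (1 / p)) ^ p = A + ε := by
    rw [← Real.rpow_mul hA.le, one_div_mul_cancel hp.ne', Real.rpow_one]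
  have hbq : ((B + ε) ^ (1 / q)) ^ q = B + ε := by
    rw [← Real.rpow_mul hB.le, one_div_mul_cancel hq.ne', Real.rpow_one]
  refine (E.mul_mem_and_norm_le_young hpq hxy hx hy (Real.rpow_pos_of_pos hA (1 / p))
    (Real.rpow_pos_of_pos hB (1 / q))).2.trans ?_
  rw [hap, hbq]
  refine mul_le_of_le_one_right (by positivity) ?_
  calc A / (p * (A + ε)) + B / (q * (B + ε))
      ≤ (A + ε) / (p * (A + ε)) + (B + ε) / (q * (B + ε)) := by gcongr <;> linarith
    _ = 1 := by
      rw [div_mul_cancel_right₀ hA.ne', div_mul_cancel_right₀ hB.ne', hpq.inv_add_inv_eq_one]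

end SymmFnSpace

theorem holder_four_general {E : SymmFnSpace ℝ mu0} (p q : ℝ) (hp : 1 < p)
    (hpq : 1 / p + 1 / q = 1) (x y : ℝ → ℝ) (hxm : Measurable x) (hym : Measurable y)
    (hx : (fun u => |x u| ^ p) ∈ E.carrier) (hy : (fun u => |y u| ^ q) ∈ E.carrier) :
    x * y ∈ E.carrier ∧
    E.N (x * y) ≤
      4 * ((E.N fun u => |x u| ^ p) ^ (1 / p) * (E.N fun u => |y u| ^ q) ^ (1 / q)) := by
  have hconj : p.HolderConjugate q :=
    Real.holderConjugate_iff.2 ⟨hp, by simpa [one_div] using hpq⟩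
  obtain ⟨hmem, hle⟩ := E.mul_mem_and_norm_le_holder hconj (hxm.mul hym) hx hy
  refine ⟨hmem, hle.trans (le_mul_of_one_le_left ?_ (by norm_num))⟩
  exact mul_nonneg (Real.rpow_nonneg (E.norm_nonneg _) _) (Real.rpow_nonneg (E.norm_nonneg _) _)

/-- The Hölder-type inequality with constant `4` in a symmetric function space on `[0,∞)`:
if `1/p + 1/q = 1`, `x ∈ E^{1/p}` and `y ∈ E^{1/q}`, then `xy ∈ E` and
`‖xy‖_E ≤ 4 ‖x‖_{E^{1/p}} ‖y‖_{E^{1/q}}` where `‖x‖_{E^{1/p}} = ‖|x|^p‖_E^{1/p}`. -/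
theorem holder_four {E : SymmFnSpace ℝ mu0} (p q : ℝ) (hp : 1 < p) (hq : 1 < q)
    (hpq : 1 / p + 1 / q = 1) (x y : ℝ → ℝ) (hxm : Measurable x) (hym : Measurable y)
    (hx : (fun u => |x u| ^ p) ∈ E.carrier) (hy : (fun u => |y u| ^ q) ∈ E.carrier) :
    x * y ∈ E.carrier ∧
    E.N (x * y) ≤
      4 * ((E.N fun u => |x u| ^ p) ^ (1 / p) * (E.N fun u => |y u| ^ q) ^ (1 / q)) :=
  holder_four_general p q hp hpq x y hxm hym hx hy
end
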